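/- arXiv:2101.03224 — 3 statements merged into one kernel-verified Lean document; each statement's English description precedes it below -/
import Mathlib

section
/- Multiplicity one for Young subgroups (Young's rule consequence): for any partition λ of k, the trivial representation of the Young subgroup S_λ = S_{λ_1} × ⋯ × S_{λ_r} occurs with multiplicity exactly one in the restriction to S_λ of the irreducible representation V^λ of S_k. -/
/-- A representation is irreducible. -/
def IsIrrep {G V : Type*} [Group G] [AddCommGroup V] [Module ℂ V]
    (ρ : Representation ℂ G V) : Prop :=
  Nontrivial V ∧ ∀ p : Submodule ℂ V, (∀ g, ∀ v ∈ p, ρ g v ∈ p) → p = ⊥ ∨ p = ⊤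

/-- The Young subgroup of `S_k` preserving the fibers of a (monotone) block-assignment
function `f : Fin k → ℕ`; for monotone `f` the fibers are consecutive blocks. -/
def youngSubgroup {k : ℕ} (f : Fin k → ℕ) : Subgroup (Equiv.Perm (Fin k)) where
  carrier := {σ | ∀ i, f (σ i) = f i}
  one_mem' := by intro i; simp
  mul_mem' := by
    intro a b ha hb i
    have h1 := hb i
    have h2 := ha (b i)
    simpa [h1] using h2
  inv_mem' := by
    intro a ha i
    have h := ha (a⁻¹ i)
    rw [Equiv.Perm.coe_inv, Equiv.apply_symm_apply] at h
    exact h.symm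

/-- The subspace of `H`-invariant vectors of a representation. -/
def invariants {G V : Type*} [Group G] [AddCommGroup V] [Module ℂ V]
    (ρ : Representation ℂ G V) (H : Subgroup G) : Submodule ℂ V where
  carrier := {v | ∀ g ∈ H, ρ g v = v}
  add_mem' := by intro a b ha hb g hg; rw [map_add, ha g hg, hb g hg]
  zero_mem' := by intro g hg; simp
  smul_mem' := by intro c v hv g hg; rw [map_smul, hv g hg]

/-!
Let `P = ∑_{h ∈ S_λ} ρ h`; its image is the space of `S_λ`-invariants. By irreducibility, `V` is
spanned by the translates `ρ g w` of a sign vector `w` of `S_{λ'}`, so the invariants are spanned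
by the vectors `P (ρ g w)`. If two entries that `g` sends to the same row of `λ` share a column of
`λ'`, the transposition `s` of these two entries satisfies `t g = g s` for the transposition
`t = g s g⁻¹ ∈ S_λ`, whence `P (ρ g w) = -P (ρ g w) = 0`. The remaining `g` place `1, …, k` in
distinct cells, and a counting argument shows these cells fill exactly the Young diagram of `λ`;
hence all such `g` form a single double coset `S_λ g₀ S_{λ'}`, on which `P (ρ g w)` is a multiple
of `P (ρ g₀ w)`.
-/

open Finset

section Symmetrizer

variable {G V : Type*} [Group G] [AddCommGroup V] [Module ℂ V] {ρ : Representation ℂ G V}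

variable (ρ) in
noncomputable def symmetrizer (H : Subgroup G) [Fintype H] : V →ₗ[ℂ] V :=
  ∑ h : H, ρ h

variable {H K : Subgroup G} [Fintype H]

lemma symmetrizer_apply (v : V) : symmetrizer ρ H v = ∑ h : H, ρ h v :=
  LinearMap.sum_apply _ _ _

lemma symmetrizer_mem_invariants (v : V) : symmetrizer ρ H v ∈ invariants ρ H := by
  intro t ht
  rw [symmetrizer_apply, map_sum]
  exact Fintype.sum_equiv (Equiv.mulLeft ⟨t, ht⟩) _ _ fun h => by simp [map_mul]

lemma symmetrizer_apply_of_mem_invariants {v : V} (hv : v ∈ invariants ρ H) :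
    symmetrizer ρ H v = (Fintype.card H : ℂ) • v := by
  rw [symmetrizer_apply, sum_congr rfl fun h _ => hv _ h.2, sum_const, card_univ,
    Nat.cast_smul_eq_nsmul]

lemma symmetrizer_apply_of_mem {t : G} (ht : t ∈ H) (v : V) :
    symmetrizer ρ H (ρ t v) = symmetrizer ρ H v := by
  rw [symmetrizer_apply, symmetrizer_apply]
  exact Fintype.sum_equiv (Equiv.mulRight ⟨t, ht⟩) _ _ fun h => by simp [map_mul]

lemma span_orbit_eq_top (hirr : IsIrrep ρ) {w : V} (hw : w ≠ 0) :
    Submodule.span ℂ (Set.range fun g => ρ g w) = ⊤ := by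
  refine (hirr.2 _ fun g v hv => ?_).resolve_left fun hbot => hw ?_
  · have hmap : (Submodule.span ℂ (Set.range fun g => ρ g w)).map (ρ g) ≤
        Submodule.span ℂ (Set.range fun g => ρ g w) := by
      rw [Submodule.map_span]
      refine Submodule.span_mono ?_
      rintro _ ⟨_, ⟨g', rfl⟩, rfl⟩
      exact ⟨g * g', by simp [map_mul]⟩
    exact hmap (Submodule.mem_map_of_mem hv)
  · rw [← Submodule.mem_bot ℂ, ← hbot]
    exact Submodule.subset_span ⟨1, by simp⟩

lemma invariants_le_span_symmetrizer_orbit (hirr : IsIrrep ρ) {w : V} (hw : w ≠ 0) :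
    invariants ρ H ≤ Submodule.span ℂ (Set.range fun g => symmetrizer ρ H (ρ g w)) := by
  intro v hv
  have hv_span : v ∈ Submodule.span ℂ (Set.range fun g => ρ g w) := by
    rw [span_orbit_eq_top hirr hw]; trivial
  have hsym := Submodule.mem_map_of_mem (f := symmetrizer ρ H) hv_span
  rw [Submodule.map_span, ← Set.range_comp, symmetrizer_apply_of_mem_invariants hv] at hsym
  exact (Submodule.smul_mem_iff _ (Nat.cast_ne_zero.2 Fintype.card_ne_zero)).1 hsym

variable {χ : G → ℂ} {w : V}

lemma symmetrizer_apply_mul_mul (hw : ∀ s ∈ K, ρ s w = χ s • w) {t s : G} (ht : t ∈ H)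
    (hs : s ∈ K) (g : G) :
    symmetrizer ρ H (ρ (t * g * s) w) = χ s • symmetrizer ρ H (ρ g w) := by
  rw [map_mul, map_mul, Module.End.mul_apply, Module.End.mul_apply, symmetrizer_apply_of_mem ht,
    hw s hs, map_smul, map_smul]

lemma symmetrizer_apply_eq_zero (hw : ∀ s ∈ K, ρ s w = χ s • w) {t s g : G} (ht : t ∈ H)
    (hs : s ∈ K) (hcomm : t * g = g * s) (hχ : χ s ≠ 1) :
    symmetrizer ρ H (ρ g w) = 0 := by
  have hfix := symmetrizer_apply_mul_mul hw (inv_mem ht) hs g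
  rw [mul_assoc, ← hcomm, inv_mul_cancel_left] at hfix
  have : (χ s - 1) • symmetrizer ρ H (ρ g w) = 0 := by rw [sub_smul, one_smul, ← hfix, sub_self]
  exact (smul_eq_zero.1 this).resolve_left (sub_ne_zero.2 hχ)

lemma symmetrizer_apply_mem_span_singleton (hw : ∀ s ∈ K, ρ s w = χ s • w) {good : G → Prop}
    (hbad : ∀ g, ¬ good g → ∃ t ∈ H, ∃ s ∈ K, t * g = g * s ∧ χ s ≠ 1)
    (hgood : ∀ g₁ g₂, good g₁ → good g₂ → ∃ t ∈ H, ∃ s ∈ K, g₂ = t * g₁ * s)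
    {g₀ : G} (hg₀ : good g₀) (g : G) :
    symmetrizer ρ H (ρ g w) ∈ Submodule.span ℂ {symmetrizer ρ H (ρ g₀ w)} := by
  by_cases hg : good g
  · obtain ⟨t, ht, s, hs, rfl⟩ := hgood g₀ g hg₀ hg
    rw [symmetrizer_apply_mul_mul hw ht hs]
    exact Submodule.smul_mem _ _ (Submodule.mem_span_singleton_self _)
  · obtain ⟨t, ht, s, hs, hcomm, hχ⟩ := hbad g hg
    rw [symmetrizer_apply_eq_zero hw ht hs hcomm hχ]
    exact Submodule.zero_mem _

theorem finrank_invariants_eq_one (hirr : IsIrrep ρ) (hw0 : w ≠ 0)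
    (hw : ∀ s ∈ K, ρ s w = χ s • w) (hne : invariants ρ H ≠ ⊥) (good : G → Prop)
    (hbad : ∀ g, ¬ good g → ∃ t ∈ H, ∃ s ∈ K, t * g = g * s ∧ χ s ≠ 1)
    (hgood : ∀ g₁ g₂, good g₁ → good g₂ → ∃ t ∈ H, ∃ s ∈ K, g₂ = t * g₁ * s) :
    Module.finrank ℂ (invariants ρ H) = 1 := by
  have hle := invariants_le_span_symmetrizer_orbit (H := H) hirr hw0
  obtain ⟨g₀, hg₀⟩ : ∃ g₀, good g₀ := by
    by_contra! hnone
    refine hne (eq_bot_iff.2 (hle.trans (Submodule.span_le.2 ?_)))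
    rintro _ ⟨g, rfl⟩
    obtain ⟨t, ht, s, hs, hcomm, hχ⟩ := hbad g (hnone g)
    simp [symmetrizer_apply_eq_zero hw ht hs hcomm hχ]
  set u := symmetrizer ρ H (ρ g₀ w)
  have heq : invariants ρ H = Submodule.span ℂ {u} := by
    refine le_antisymm (hle.trans (Submodule.span_le.2 ?_))
      ((Submodule.span_singleton_le_iff_mem _ _).2 (symmetrizer_mem_invariants _))
    rintro _ ⟨g, rfl⟩
    exact symmetrizer_apply_mem_span_singleton hw hbad hgood hg₀ g
  have hu : u ≠ 0 := by
    rintro hu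
    rw [heq, hu, Submodule.span_zero_singleton] at hne
    exact hne rfl
  rw [heq, finrank_span_singleton hu]

end Symmetrizer

section Diagram

lemma card_filter_fst_eq_snd_lt_le (S : Finset (ℕ × ℕ)) (r c : ℕ) :
    #{p ∈ S | p.1 = r ∧ p.2 < c} ≤ c := by
  simpa using card_le_card_of_injOn Prod.snd (t := range c)
    (fun p hp => by simp only [coe_filter, Set.mem_ofPred_eq] at hp; simpa using hp.2.2)
    (fun p hp q hq h => by
      simp only [coe_filter, Set.mem_ofPred_eq] at hp hq
      exact Prod.ext (hp.2.1.trans hq.2.1.symm) h)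

variable {R : Finset ℕ} {Λ : ℕ → ℕ} {S : Finset (ℕ × ℕ)}

lemma sum_card_filter_fst_eq_snd_lt (hS : ∀ p ∈ S, p.1 ∈ R)
    (hcol : ∀ c, #{p ∈ S | p.2 = c} = #{r ∈ R | c < Λ r}) (c : ℕ) :
    ∑ r ∈ R, #{p ∈ S | p.1 = r ∧ p.2 < c} = ∑ r ∈ R, min (Λ r) c := by
  calc ∑ r ∈ R, #{p ∈ S | p.1 = r ∧ p.2 < c}
      = #{p ∈ S | p.2 < c} := by
        rw [card_eq_sum_card_fiberwise (f := Prod.fst) (t := R)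
          fun p hp => hS p (mem_filter.1 hp).1]
        simp only [filter_filter, and_comm]
    _ = ∑ j ∈ range c, #{p ∈ S | p.2 = j} := by
        rw [card_eq_sum_card_fiberwise (f := Prod.snd) (t := range c)
          fun p hp => by simpa using (mem_filter.1 hp).2]
        refine sum_congr rfl fun j hj => ?_
        rw [filter_filter]
        congr 1
        ext p
        simp only [mem_filter, mem_range] at hj ⊢
        exact ⟨fun h => ⟨h.1, h.2.2⟩, fun h => ⟨h.1, h.2 ▸ hj, h.2⟩⟩
    _ = ∑ r ∈ R, #{j ∈ range c | j < Λ r} := by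
        simp only [hcol, card_filter]
        exact sum_comm
    _ = ∑ r ∈ R, min (Λ r) c := by
        refine sum_congr rfl fun r _ => ?_
        rw [← card_range (min (Λ r) c)]
        congr 1
        ext j
        simp only [mem_filter, mem_range, lt_min_iff]
        exact and_comm

/-- The extremal case of Gale–Ryser. Row `r` has at most `min (Λ r) c` cells in the columns `< c`,
and the column lengths make these bounds add up to the total number of such cells, so each is
attained; for `c = Λ r` this puts the whole row `r` in the columns `< Λ r`. -/
lemma snd_lt_of_card_rows_cols (hS : ∀ p ∈ S, p.1 ∈ R)
    (hrow : ∀ r ∈ R, #{p ∈ S | p.1 = r} = Λ r)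
    (hcol : ∀ c, #{p ∈ S | p.2 = c} = #{r ∈ R | c < Λ r}) {p : ℕ × ℕ} (hp : p ∈ S) :
    p.2 < Λ p.1 := by
  obtain ⟨r, c⟩ := p
  have hr : r ∈ R := hS _ hp
  have hle : ∀ r' ∈ R, #{p ∈ S | p.1 = r' ∧ p.2 < Λ r} ≤ min (Λ r') (Λ r) := fun r' hr' =>
    le_min ((hrow r' hr') ▸ card_le_card (monotone_filter_right _ fun _ _ h => h.1))
      (card_filter_fst_eq_snd_lt_le S r' (Λ r))
  have hfull : #{p ∈ S | p.1 = r ∧ p.2 < Λ r} = #{p ∈ S | p.1 = r} := by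
    rw [(sum_eq_sum_iff_of_le hle).1 (sum_card_filter_fst_eq_snd_lt hS hcol (Λ r)) r hr,
      min_self, hrow r hr]
  have hsub : {p ∈ S | p.1 = r ∧ p.2 < Λ r} = {p ∈ S | p.1 = r} :=
    eq_of_subset_of_card_le (monotone_filter_right _ fun _ _ h => h.1) hfull.ge
  have hmem : (r, c) ∈ {p ∈ S | p.1 = r ∧ p.2 < Λ r} := by
    rw [hsub]; exact mem_filter.2 ⟨hp, rfl⟩
  exact (mem_filter.1 hmem).2.2

lemma mem_iff_of_card_rows_cols (hS : ∀ p ∈ S, p.1 ∈ R)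
    (hrow : ∀ r ∈ R, #{p ∈ S | p.1 = r} = Λ r)
    (hcol : ∀ c, #{p ∈ S | p.2 = c} = #{r ∈ R | c < Λ r}) (p : ℕ × ℕ) :
    p ∈ S ↔ p.1 ∈ R ∧ p.2 < Λ p.1 := by
  refine ⟨fun hp => ⟨hS p hp, snd_lt_of_card_rows_cols hS hrow hcol hp⟩, fun ⟨hr, hc⟩ => ?_⟩
  have hsub : {q ∈ S | q.1 = p.1} ⊆ (range (Λ p.1)).image (Prod.mk p.1) := by
    intro q hq
    obtain ⟨hqS, hq1⟩ := mem_filter.1 hq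
    have := snd_lt_of_card_rows_cols hS hrow hcol hqS
    exact mem_image.2 ⟨q.2, mem_range.2 (hq1 ▸ this), by rw [← hq1]⟩
  have hrow_eq := eq_of_subset_of_card_le hsub
    (card_image_le.trans ((card_range _).trans (hrow _ hr).symm).le)
  have : p ∈ (range (Λ p.1)).image (Prod.mk p.1) := mem_image.2 ⟨p.2, mem_range.2 hc, rfl⟩
  rw [← hrow_eq] at this
  exact (mem_filter.1 this).1

end Diagram

section YoungSubgroup

variable {k : ℕ} {f f' : Fin k → ℕ}

lemma swap_mem_youngSubgroup {x y : Fin k} (h : f x = f y) : Equiv.swap x y ∈ youngSubgroup f := by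
  intro i
  rw [Equiv.swap_apply_def]
  split_ifs with hx hy
  · rw [hx, h]
  · rw [hy, h]
  · rfl

def rowCol (f f' : Fin k → ℕ) (g : Equiv.Perm (Fin k)) (x : Fin k) : ℕ × ℕ :=
  (f (g x), f' x)

lemma exists_swap_of_not_injective_rowCol {g : Equiv.Perm (Fin k)}
    (hg : ¬ Function.Injective (rowCol f f' g)) :
    ∃ t ∈ youngSubgroup f, ∃ s ∈ youngSubgroup f', t * g = g * s ∧ Equiv.Perm.sign s = -1 := by
  obtain ⟨x, y, hxy, hne⟩ : ∃ x y, rowCol f f' g x = rowCol f f' g y ∧ x ≠ y := by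
    simpa [Function.Injective] using hg
  obtain ⟨hrow, hcol⟩ := Prod.ext_iff.1 hxy
  refine ⟨_, swap_mem_youngSubgroup hrow, _, swap_mem_youngSubgroup hcol, ?_,
    Equiv.Perm.sign_swap hne⟩
  rw [Equiv.swap_apply_apply, inv_mul_cancel_right]

lemma mem_image_rowCol_iff
    (htrans : ∀ c, #{x | f' x = c} = #{r ∈ univ.image f | c < #{y | f y = r}})
    {g : Equiv.Perm (Fin k)} (hg : Function.Injective (rowCol f f' g)) (p : ℕ × ℕ) :
    p ∈ univ.image (rowCol f f' g) ↔ p.1 ∈ univ.image f ∧ p.2 < #{y | f y = p.1} := by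
  refine mem_iff_of_card_rows_cols (Λ := fun r => #{y | f y = r}) (fun p hp => ?_)
    (fun r _ => ?_) (fun c => ?_) p
  · obtain ⟨x, -, rfl⟩ := mem_image.1 hp
    exact mem_image_of_mem f (mem_univ _)
  · rw [filter_image, card_image_of_injective _ hg]
    refine card_equiv g fun i => ?_
    rw [mem_filter, mem_filter]
    simp [rowCol]
  · rw [filter_image, card_image_of_injective _ hg, ← htrans c]
    rfl

lemma exists_eq_mul_mul_of_injective_rowCol
    (htrans : ∀ c, #{x | f' x = c} = #{r ∈ univ.image f | c < #{y | f y = r}})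
    {g₁ g₂ : Equiv.Perm (Fin k)} (h₁ : Function.Injective (rowCol f f' g₁))
    (h₂ : Function.Injective (rowCol f f' g₂)) :
    ∃ t ∈ youngSubgroup f, ∃ s ∈ youngSubgroup f', g₂ = t * g₁ * s := by
  have hrange : Set.range (rowCol f f' g₂) = Set.range (rowCol f f' g₁) := by
    ext p
    simpa using (mem_image_rowCol_iff htrans h₂ p).trans (mem_image_rowCol_iff htrans h₁ p).symm
  let s : Equiv.Perm (Fin k) := (Equiv.ofInjective _ h₂).trans
    ((Equiv.setCongr hrange).trans (Equiv.ofInjective _ h₁).symm)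
  have hs (x : Fin k) : rowCol f f' g₁ (s x) = rowCol f f' g₂ x :=
    Equiv.apply_ofInjective_symm h₁ _
  refine ⟨g₂ * s⁻¹ * g₁⁻¹, fun i => ?_, s, fun i => (Prod.ext_iff.1 (hs i)).2, by group⟩
  have := (Prod.ext_iff.1 (hs (s⁻¹ (g₁⁻¹ i)))).1
  simpa [rowCol] using this.symm

end YoungSubgroup

/-- `V^λ` is pinned down among irreducible representations by having a nonzero `S_λ`-invariant
vector and a nonzero `S_{λ'}`-sign vector, where `f'` encodes the conjugate partition `λ'`. -/
theorem stmt_5_general {k : ℕ} (f f' : Fin k → ℕ)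
    (htrans : ∀ i : ℕ,
      (Finset.univ.filter fun t => f' t = i).card =
        ((Finset.image f Finset.univ).filter
          fun j => i < (Finset.univ.filter fun t => f t = j).card).card)
    {V : Type*} [AddCommGroup V] [Module ℂ V]
    (ρ : Representation ℂ (Equiv.Perm (Fin k)) V)
    (hirr : IsIrrep ρ)
    (h1 : ∃ v : V, v ≠ 0 ∧ ∀ σ ∈ youngSubgroup f, ρ σ v = v)
    (h2 : ∃ v : V, v ≠ 0 ∧ ∀ σ ∈ youngSubgroup f',
      ρ σ v = ((Equiv.Perm.sign σ : ℤ) : ℂ) • v) :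
    Module.finrank ℂ ↥(invariants ρ (youngSubgroup f)) = 1 := by
  classical
  obtain ⟨v, hv0, hv⟩ := h1
  obtain ⟨w, hw0, hw⟩ := h2
  refine finrank_invariants_eq_one hirr hw0 hw ((Submodule.ne_bot_iff _).2 ⟨v, hv, hv0⟩)
    (fun g => Function.Injective (rowCol f f' g)) (fun g hg => ?_)
    (fun _ _ => exists_eq_mul_mul_of_injective_rowCol htrans)
  obtain ⟨t, ht, s, hs, hcomm, hsign⟩ := exists_swap_of_not_injective_rowCol hg
  exact ⟨t, ht, s, hs, hcomm, by norm_num [hsign]⟩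

/-- Young's rule, multiplicity one: for a partition `λ ⊢ k` (encoded by a monotone
block-assignment `f : Fin k → ℕ` whose fibers are the rows), the trivial representation of the
Young subgroup `S_λ` occurs with multiplicity exactly one in the restriction of the irreducible
representation `V^λ` of `S_k`. Here `V^λ` is characterized as an irreducible representation
having a nonzero `S_λ`-invariant vector and a nonzero vector transforming by the sign character
under the Young subgroup `S_{λ'}` of the transposed partition `λ'` (encoded by `f'`). -/
theorem stmt_5 {k : ℕ} (f f' : Fin k → ℕ) (hf : Monotone f) (hf' : Monotone f')
    (htrans : ∀ i : ℕ,
      (Finset.univ.filter fun t => f' t = i).card =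
        ((Finset.image f Finset.univ).filter
          fun j => i < (Finset.univ.filter fun t => f t = j).card).card)
    {V : Type*} [AddCommGroup V] [Module ℂ V] [FiniteDimensional ℂ V]
    (ρ : Representation ℂ (Equiv.Perm (Fin k)) V)
    (hirr : IsIrrep ρ)
    (h1 : ∃ v : V, v ≠ 0 ∧ ∀ σ ∈ youngSubgroup f, ρ σ v = v)
    (h2 : ∃ v : V, v ≠ 0 ∧ ∀ σ ∈ youngSubgroup f',
      ρ σ v = ((Equiv.Perm.sign σ : ℤ) : ℂ) • v) :
    Module.finrank ℂ ↥(invariants ρ (youngSubgroup f)) = 1 :=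
  stmt_5_general f f' htrans ρ hirr h1 h2
end

section
/- Intertwining identity for the mixed-tensor flip isomorphism: let φ: End(T^{k,ℓ}_n) → End((ℂ^n)^{⊗(k+ℓ)}) be the linear isomorphism determined on matrix units by φ(e_I ⊗ ě_J ⊗ ě_{I'} ⊗ e_{J'}) = e_{I⊔J'} ⊗ ě_{I'⊔J}. Then for all σ = (σ_1,σ_2), τ = (τ_1,τ_2) ∈ S_k × S_ℓ and all A ∈ End(T^{k,ℓ}_n): φ(ρ(σ_1)ρ̂(σ_2) A ρ(τ_1)ρ̂(τ_2)) = ρ^{k+ℓ}(σ_1, τ_2^{-1}) φ(A) ρ^{k+ℓ}(τ_1, σ_2^{-1}). -/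
/-- Matrices of endomorphisms of the mixed tensor space `T^{k,ℓ}_n`, in the basis of
pure tensors `e_I ⊗ ě_J`. -/
abbrev TMat (k l n : ℕ) : Type :=
  ((Fin k → Fin n) × (Fin l → Fin n)) → ((Fin k → Fin n) × (Fin l → Fin n)) → ℂ

/-- First-block restriction of an index function on `Fin (k+ℓ)`. -/
def fstPart {k l n : ℕ} (K : Fin (k + l) → Fin n) : Fin k → Fin n :=
  fun t => K (Fin.castAdd l t)

/-- Second-block restriction of an index function on `Fin (k+ℓ)`. -/
def sndPart {k l n : ℕ} (K : Fin (k + l) → Fin n) : Fin l → Fin n :=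
  fun t => K (Fin.natAdd k t)

/-- The flip isomorphism `φ : End(T^{k,ℓ}_n) → End((ℂ^n)^{⊗(k+ℓ)})`, determined on matrix
units by `φ(e_I ⊗ ě_J ⊗ ě_{I'} ⊗ e_{J'}) = e_{I⊔J'} ⊗ ě_{I'⊔J}`, in coordinates. -/
def phiMap {k l n : ℕ} (A : TMat k l n) :
    (Fin (k + l) → Fin n) → (Fin (k + l) → Fin n) → ℂ :=
  fun K K' => A (fstPart K, sndPart K') (fstPart K', sndPart K)

/-- Left multiplication by `ρ(σ)ρ̂(τ)` on `End(T^{k,ℓ}_n)`, in coordinates. -/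
def lP {k l n : ℕ} (σ : Equiv.Perm (Fin k)) (τ : Equiv.Perm (Fin l)) (A : TMat k l n) :
    TMat k l n :=
  fun P P' => A (P.1 ∘ σ, P.2 ∘ τ) P'

/-- Right multiplication by `ρ(σ)ρ̂(τ)` on `End(T^{k,ℓ}_n)`, in coordinates. -/
def rP {k l n : ℕ} (σ : Equiv.Perm (Fin k)) (τ : Equiv.Perm (Fin l)) (A : TMat k l n) :
    TMat k l n :=
  fun P P' => A P (P'.1 ∘ ⇑σ⁻¹, P'.2 ∘ ⇑τ⁻¹)

/-- Left multiplication by `ρ^{k+ℓ}(π)` on `End((ℂ^n)^{⊗(k+ℓ)})`, in coordinates. -/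
def lB {k l n : ℕ} (π : Equiv.Perm (Fin (k + l)))
    (B : (Fin (k + l) → Fin n) → (Fin (k + l) → Fin n) → ℂ) :
    (Fin (k + l) → Fin n) → (Fin (k + l) → Fin n) → ℂ :=
  fun K K' => B (K ∘ π) K'

/-- Right multiplication by `ρ^{k+ℓ}(π)` on `End((ℂ^n)^{⊗(k+ℓ)})`, in coordinates. -/
def rB {k l n : ℕ} (π : Equiv.Perm (Fin (k + l)))
    (B : (Fin (k + l) → Fin n) → (Fin (k + l) → Fin n) → ℂ) :
    (Fin (k + l) → Fin n) → (Fin (k + l) → Fin n) → ℂ :=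
  fun K K' => B K (K' ∘ ⇑π⁻¹)

/-- The embedding `S_k × S_ℓ ≤ S_{k+ℓ}` acting on the first `k` and last `ℓ` coordinates. -/
def combPerm {k l : ℕ} (α : Equiv.Perm (Fin k)) (β : Equiv.Perm (Fin l)) :
    Equiv.Perm (Fin (k + l)) :=
  finSumFinEquiv.permCongr (Equiv.sumCongr α β)

lemma fstPart_comb {k l n : ℕ} (K : Fin (k + l) → Fin n) (α : Equiv.Perm (Fin k))
    (β : Equiv.Perm (Fin l)) : fstPart (K ∘ combPerm α β) = fstPart K ∘ α := by
  funext t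
  simp only [fstPart, Function.comp_apply, combPerm, Equiv.permCongr_apply,
    finSumFinEquiv_symm_apply_castAdd, Equiv.sumCongr_apply, Sum.map_inl,
    finSumFinEquiv_apply_left]

lemma sndPart_comb {k l n : ℕ} (K : Fin (k + l) → Fin n) (α : Equiv.Perm (Fin k))
    (β : Equiv.Perm (Fin l)) : sndPart (K ∘ combPerm α β) = sndPart K ∘ β := by
  funext t
  simp only [sndPart, Function.comp_apply, combPerm, Equiv.permCongr_apply,
    finSumFinEquiv_symm_apply_natAdd, Equiv.sumCongr_apply, Sum.map_inr,
    finSumFinEquiv_apply_right]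

lemma combPerm_inv {k l : ℕ} (α : Equiv.Perm (Fin k)) (β : Equiv.Perm (Fin l)) :
    (combPerm α β)⁻¹ = combPerm α⁻¹ β⁻¹ := by
  ext x
  simp [combPerm, Equiv.Perm.inv_def, Equiv.permCongr, Equiv.equivCongr, Equiv.sumCongr]

/-- Intertwining identity for the mixed-tensor flip isomorphism `φ`: for all
`σ = (σ₁,σ₂), τ = (τ₁,τ₂) ∈ S_k × S_ℓ` and all `A ∈ End(T^{k,ℓ}_n)`,
`φ(ρ(σ₁)ρ̂(σ₂) A ρ(τ₁)ρ̂(τ₂)) = ρ^{k+ℓ}(σ₁, τ₂⁻¹) φ(A) ρ^{k+ℓ}(τ₁, σ₂⁻¹)`. -/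
theorem stmt_10 (k l n : ℕ) (σ₁ τ₁ : Equiv.Perm (Fin k)) (σ₂ τ₂ : Equiv.Perm (Fin l))
    (A : TMat k l n) :
    phiMap (lP σ₁ σ₂ (rP τ₁ τ₂ A)) =
      lB (combPerm σ₁ τ₂⁻¹) (rB (combPerm τ₁ σ₂⁻¹) (phiMap A)) := by
  funext K K'
  simp [phiMap, lP, rP, lB, rB, combPerm_inv, fstPart_comb, sndPart_comb]
end

section
/- For fixed partitions μ ⊢ k and ν ⊢ ℓ, the dimension D_{[μ,ν]}(n) of the irreducible U(n)-representation with highest weight (μ_1,...,μ_{ℓ(μ)}, 0,...,0, −ν_{ℓ(ν)},...,−ν_1) satisfies D_{[μ,ν]}(n) ≍ n^{k+ℓ} as n → ∞; i.e., there exist constants c, C > 0 and n_0 such that c·n^{k+ℓ} ≤ D_{[μ,ν]}(n) ≤ C·n^{k+ℓ} for all n ≥ n_0. -/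
/-- The dominant weight `Λ_{[μ,ν]}(n)` of `U(n)`: first entries the parts of `μ` (given by the
antitone part function `m` with `a` nonzero parts), last entries the negatives of the parts of
`ν` (part function `nu`, `b` nonzero parts) reversed, zeros in between. -/
def wt (m nu : ℕ → ℕ) (a b n i : ℕ) : ℤ :=
  if i < a then (m i : ℤ) else if n - b ≤ i then -(nu (n - 1 - i) : ℤ) else 0

/-- The dimension `D_{[μ,ν]}(n)` of the irreducible `U(n)`-representation of highest weight
`Λ_{[μ,ν]}(n)`, computed by the Weyl dimension formula
`∏_{1≤i<j≤n} (Λ_i − Λ_j + j − i)/(j − i)`. -/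
noncomputable def weylD (m nu : ℕ → ℕ) (a b n : ℕ) : ℝ :=
  ∏ p ∈ Finset.filter (fun p => p.1 < p.2) (Finset.range n ×ˢ Finset.range n),
    (((wt m nu a b n p.1 : ℝ) - (wt m nu a b n p.2 : ℝ) + (p.2 : ℝ) - (p.1 : ℝ)) /
      ((p.2 : ℝ) - (p.1 : ℝ)))

open Finset

lemma key_prod (c : ℕ) (x : ℝ) :
    (∏ t ∈ range c, (x + 1 + t)) * x = (∏ t ∈ range c, (x + t)) * (x + c) := by
  have h1 := Finset.prod_range_succ (fun t => x + (t:ℕ)) c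
  have h2 := Finset.prod_range_succ' (fun t => x + (t:ℕ)) c
  have h3 : ∏ t ∈ range c, (x + 1 + (t:ℕ)) = ∏ t ∈ range c, (x + ((t:ℕ)+1)) := by
    apply Finset.prod_congr rfl; intro t _; ring
  rw [h3]
  rw [h1] at h2
  simp only [Nat.cast_add, Nat.cast_one, Nat.cast_zero, add_zero] at h2 ⊢
  linarith [h2]

lemma tele' (c s : ℕ) (hs : 1 ≤ s) (M : ℕ) :
    ∏ d ∈ range M, ((s:ℝ) + d + c) / ((s:ℝ) + d)
      = ∏ t ∈ range c, ((s:ℝ) + M + t) / ((s:ℝ) + t) := by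
  induction M with
  | zero =>
    rw [prod_range_zero]
    symm; apply Finset.prod_eq_one
    intro t _
    rw [Nat.cast_zero, add_zero]
    exact div_self (by positivity)
  | succ M ih =>
    rw [prod_range_succ, ih]
    have hx : (0:ℝ) < (s:ℝ) + M := by positivity
    rw [Finset.prod_div_distrib, Finset.prod_div_distrib, div_mul_div_comm]
    have key := key_prod c ((s:ℝ) + M)
    have hP : (∏ t ∈ range c, ((s:ℝ) + t)) ≠ 0 := by
      apply Finset.prod_ne_zero_iff.2; intro t _; positivity
    have hnum : ∏ t ∈ range c, ((s:ℝ) + (M+1:ℕ) + t) = ∏ t ∈ range c, ((s:ℝ) + M + 1 + t) := by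
      apply Finset.prod_congr rfl; intro t _; push_cast; ring
    rw [hnum]
    rw [div_eq_div_iff (by positivity) (by positivity)]
    linear_combination (-(∏ t ∈ range c, ((s:ℝ) + t))) * key

lemma pairProd_eq₁ (n : ℕ) (f : ℕ → ℕ → ℝ) :
    ∏ p ∈ Finset.filter (fun p => p.1 < p.2) (range n ×ˢ range n), f p.1 p.2
      = ∏ i ∈ range n, ∏ j ∈ Ico (i+1) n, f i j := by
  rw [Finset.prod_filter, Finset.prod_product]
  apply Finset.prod_congr rfl
  intro i _
  rw [← Finset.prod_filter]
  apply Finset.prod_congr _ (fun _ _ => rfl)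
  ext j
  simp only [mem_filter, mem_range, mem_Ico]
  omega

lemma pairProd_eq₂ (n : ℕ) (f : ℕ → ℕ → ℝ) :
    ∏ p ∈ Finset.filter (fun p => p.1 < p.2) (range n ×ˢ range n), f p.1 p.2
      = ∏ j ∈ range n, ∏ i ∈ range j, f i j := by
  rw [Finset.prod_filter, Finset.prod_product, Finset.prod_comm]
  apply Finset.prod_congr rfl
  intro j hj
  rw [← Finset.prod_filter]
  apply Finset.prod_congr _ (fun _ _ => rfl)
  ext i
  simp only [mem_filter, mem_range]
  simp only [mem_range] at hj
  omega

lemma prodI (c i u v : ℕ) (hiu : i < u) :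
    ∏ j ∈ Ico u v, (((c:ℝ) + j - i) / ((j:ℝ) - i))
      = ∏ t ∈ range c, (((u - i : ℕ):ℝ) + ((v - u : ℕ):ℝ) + t) / (((u - i : ℕ):ℝ) + t) := by
  rw [Finset.prod_Ico_eq_prod_range]
  rw [← tele' c (u - i) (by omega) (v - u)]
  apply Finset.prod_congr rfl
  intro d _
  have h1 : ((u + d : ℕ):ℝ) - i = ((u - i : ℕ):ℝ) + d := by
    have : (u:ℝ) - i = ((u - i : ℕ):ℝ) := by push_cast [Nat.cast_sub hiu.le]; ring
    push_cast
    push_cast at this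
    linarith
  rw [show ((c:ℝ) + ↑(u + d) - ↑i) = (↑(u+d) - (i:ℝ)) + c by ring, h1]

lemma prodD (c j u v : ℕ) (huv : u ≤ v) (hvj : v ≤ j) :
    ∏ i ∈ Ico u v, (((c:ℝ) + j - i) / ((j:ℝ) - i))
      = ∏ t ∈ range c, (((j + 1 - v : ℕ):ℝ) + ((v - u : ℕ):ℝ) + t) / (((j + 1 - v : ℕ):ℝ) + t) := by
  have hbij : ∏ i ∈ Ico u v, (((c:ℝ) + j - i) / ((j:ℝ) - i))
      = ∏ d ∈ Ico (j + 1 - v) (j + 1 - u), (((c:ℝ) + d) / (d:ℝ)) := by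
    apply Finset.prod_nbij' (fun i => j - i) (fun d => j - d)
    · intro i hi; simp only [mem_Ico] at hi ⊢; omega
    · intro d hd; simp only [mem_Ico] at hd ⊢; omega
    · intro i hi; simp only [mem_Ico] at hi; omega
    · intro d hd; simp only [mem_Ico] at hd; omega
    · intro i hi
      simp only [mem_Ico] at hi
      have : ((j - i : ℕ):ℝ) = (j:ℝ) - i := by push_cast [Nat.cast_sub (by omega : i ≤ j)]; ring
      rw [this]
      ring
  rw [hbij, Finset.prod_Ico_eq_prod_range]
  have hM : j + 1 - u - (j + 1 - v) = v - u := by omega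
  rw [hM, ← tele' c (j + 1 - v) (by omega) (v - u)]
  apply Finset.prod_congr rfl
  intro d _
  push_cast
  ring

lemma wt_anti (m nu : ℕ → ℕ) (a b n : ℕ) (hm : Antitone m) (hnu : Antitone nu)
    {i j : ℕ} (hij : i ≤ j) (hj : j < n) :
    wt m nu a b n j ≤ wt m nu a b n i := by
  unfold wt
  split_ifs <;>
    first
      | omega
      | (exact_mod_cast hm hij)
      | (refine neg_le_neg ?_; exact_mod_cast hnu (by omega))

lemma wt_le_top (m nu : ℕ → ℕ) (a b n i : ℕ) :
    wt m nu a b n i ≤ (if i < a then (m i : ℤ) else 0) := by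
  unfold wt; split_ifs <;> omega

lemma neg_wt_le_bot (m nu : ℕ → ℕ) (a b n i : ℕ) :
    -wt m nu a b n i ≤ (if n - b ≤ i then (nu (n - 1 - i) : ℤ) else 0) := by
  unfold wt; split_ifs <;> omega
open Finset

lemma sumA (a n : ℕ) (m : ℕ → ℕ) (han : a ≤ n) :
    ∑ i ∈ range n, (if i < a then m i else 0) = ∑ i ∈ range a, m i := by
  rw [← Finset.sum_filter]
  apply Finset.sum_congr _ (fun _ _ => rfl)
  ext i
  simp only [mem_filter, mem_range]
  omega

lemma sumB (b n : ℕ) (nu : ℕ → ℕ) (hbn : b ≤ n) :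
    ∑ j ∈ range n, (if n - b ≤ j then nu (n - 1 - j) else 0) = ∑ t ∈ range b, nu t := by
  rw [← Finset.sum_filter]
  have h1 : filter (fun j => n - b ≤ j) (range n) = Ico (n - b) n := by
    ext j; simp only [mem_filter, mem_range, mem_Ico]; omega
  rw [h1, Finset.sum_Ico_eq_sum_range]
  have h2 : n - (n - b) = b := by omega
  rw [h2]
  rw [← Finset.sum_range_reflect]
  apply Finset.sum_congr rfl
  intro d hd
  simp only [mem_range] at hd
  congr 1
  omega
open Finset

lemma upper (k l a b n : ℕ) (m nu : ℕ → ℕ)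
    (hm : Antitone m) (hnu : Antitone nu)
    (hma : ∀ i, m i ≠ 0 ↔ i < a) (hnub : ∀ i, nu i ≠ 0 ↔ i < b)
    (hmk : ∑ i ∈ Finset.range a, m i = k) (hnl : ∑ i ∈ Finset.range b, nu i = l)
    (hn : 2*(a+b) + k + l + 2 ≤ n) :
    weylD m nu a b n ≤ (2*(n:ℝ))^(k+l) := by
  have hab : a + b ≤ n := by omega
  have hn1 : (1:ℝ) ≤ n := by exact_mod_cast Nat.one_le_cast.2 (by omega)
  have hmk' : ∀ i, m i ≤ k := by
    intro i
    by_cases hi : i < a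
    · exact hmk ▸ Finset.single_le_sum (f := m) (fun _ _ => Nat.zero_le _) (mem_range.2 hi)
    · have : m i = 0 := by by_contra h; exact hi ((hma i).1 h)
      omega
  have hnl' : ∀ t, nu t ≤ l := by
    intro t
    by_cases ht : t < b
    · exact hnl ▸ Finset.single_le_sum (f := nu) (fun _ _ => Nat.zero_le _) (mem_range.2 ht)
    · have : nu t = 0 := by by_contra h; exact ht ((hnub t).1 h)
      omega
  set tA : ℕ → ℕ := fun i => if i < a then m i else 0 with htA
  set tB : ℕ → ℕ := fun j => if n - b ≤ j then nu (n - 1 - j) else 0 with htB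
  have step1 : weylD m nu a b n ≤
      ∏ p ∈ Finset.filter (fun p => p.1 < p.2) (range n ×ˢ range n),
        ((((tA p.1 : ℝ) + p.2 - p.1) / ((p.2:ℝ) - p.1)) *
         (((tB p.2 : ℝ) + p.2 - p.1) / ((p.2:ℝ) - p.1))) := by
    apply Finset.prod_le_prod
    · intro p hp
      simp only [mem_filter, mem_product, mem_range] at hp
      have hd : (0:ℝ) < (p.2:ℝ) - p.1 := by
        have : (p.1:ℝ) < p.2 := by exact_mod_cast hp.2
        linarith
      have hdom : (wt m nu a b n p.2 : ℝ) ≤ (wt m nu a b n p.1 : ℝ) := by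
        exact_mod_cast wt_anti m nu a b n hm hnu hp.2.le hp.1.2
      apply div_nonneg _ hd.le
      linarith
    · intro p hp
      simp only [mem_filter, mem_product, mem_range] at hp
      have hd : (0:ℝ) < (p.2:ℝ) - p.1 := by
        have : (p.1:ℝ) < p.2 := by exact_mod_cast hp.2
        linarith
      have h1 : (wt m nu a b n p.1 : ℝ) ≤ tA p.1 := by
        have := wt_le_top m nu a b n p.1
        simp only [htA]
        split_ifs with h <;> simp only [h, if_pos, if_neg, not_true, not_false_iff] at this <;>
          exact_mod_cast this
      have h2 : -(wt m nu a b n p.2 : ℝ) ≤ tB p.2 := by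
        have := neg_wt_le_bot m nu a b n p.2
        simp only [htB]
        split_ifs with h <;> simp only [h, if_pos, if_neg, not_true, not_false_iff] at this <;>
          exact_mod_cast this
      have htA0 : (0:ℝ) ≤ tA p.1 := by positivity
      have htB0 : (0:ℝ) ≤ tB p.2 := by positivity
      rw [div_mul_div_comm, div_le_div_iff₀ hd (by positivity)]
      nlinarith [mul_nonneg htA0 htB0, mul_pos hd hd]
  apply le_trans step1
  rw [Finset.prod_mul_distrib]
  have boundA : (∏ p ∈ Finset.filter (fun p => p.1 < p.2) (range n ×ˢ range n),
      (((tA p.1 : ℝ) + p.2 - p.1) / ((p.2:ℝ) - p.1))) ≤ (2*(n:ℝ))^k := by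
    rw [pairProd_eq₁ n (fun i j => (((tA i : ℝ) + j - i) / ((j:ℝ) - i)))]
    have hper : ∀ i ∈ range n,
        (∏ j ∈ Ico (i+1) n, (((tA i : ℝ) + j - i) / ((j:ℝ) - i))) ≤ (2*(n:ℝ))^(tA i) := by
      intro i hi
      simp only [mem_range] at hi
      by_cases hia : i < a
      · have htAi : tA i = m i := by simp only [htA]; rw [if_pos hia]
        rw [htAi, prodI (m i) i (i+1) n (by omega)]
        calc ∏ t ∈ range (m i), (((i+1-i:ℕ):ℝ) + ((n-(i+1):ℕ):ℝ) + t) / (((i+1-i:ℕ):ℝ) + t)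
            ≤ ∏ _t ∈ range (m i), (2*(n:ℝ)) := by
              apply Finset.prod_le_prod
              · intro t _; positivity
              · intro t ht
                simp only [mem_range] at ht
                have e1 : i + 1 - i = 1 := by omega
                rw [e1]
                have h2 : ((n-(i+1):ℕ):ℝ) ≤ n := by
                  have hk : n - (i+1) ≤ n := by omega
                  exact_mod_cast hk
                have h3 : (t:ℝ) + 1 ≤ k := by
                  have hk : t + 1 ≤ k := by have := hmk' i; omega
                  exact_mod_cast hk
                have h4 : (k:ℝ) ≤ n := by exact_mod_cast Nat.cast_le.2 (by omega)
                rw [div_le_iff₀ (by positivity)]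
                push_cast
                nlinarith [Nat.cast_nonneg (α := ℝ) t]
          _ = (2*(n:ℝ))^(m i) := by rw [Finset.prod_const, Finset.card_range]
      · have htAi : tA i = 0 := by simp only [htA]; rw [if_neg hia]
        rw [htAi, pow_zero]
        apply le_of_eq
        apply Finset.prod_eq_one
        intro j hj
        simp only [mem_Ico] at hj
        have : ((0:ℕ):ℝ) + j - i = (j:ℝ) - i := by push_cast; ring
        rw [this]
        apply div_self
        have : (i:ℝ) < j := by exact_mod_cast Nat.cast_lt.2 (by omega)
        linarith
    calc (∏ i ∈ range n, ∏ j ∈ Ico (i+1) n, (((tA i : ℝ) + j - i) / ((j:ℝ) - i)))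
        ≤ ∏ i ∈ range n, (2*(n:ℝ))^(tA i) := by
          apply Finset.prod_le_prod _ hper
          intro i _
          apply Finset.prod_nonneg
          intro j hj
          simp only [mem_Ico] at hj
          have : (i:ℝ) < j := by exact_mod_cast Nat.cast_lt.2 (by omega)
          have : (0:ℝ) ≤ (tA i : ℝ) := by positivity
          apply div_nonneg <;> linarith
      _ = (2*(n:ℝ))^(∑ i ∈ range n, tA i) := by rw [Finset.prod_pow_eq_pow_sum]
      _ = (2*(n:ℝ))^k := by rw [htA, sumA a n m (by omega), hmk]
  have boundB : (∏ p ∈ Finset.filter (fun p => p.1 < p.2) (range n ×ˢ range n),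
      (((tB p.2 : ℝ) + p.2 - p.1) / ((p.2:ℝ) - p.1))) ≤ (2*(n:ℝ))^l := by
    rw [pairProd_eq₂ n (fun i j => (((tB j : ℝ) + j - i) / ((j:ℝ) - i)))]
    have hper : ∀ j ∈ range n,
        (∏ i ∈ range j, (((tB j : ℝ) + j - i) / ((j:ℝ) - i))) ≤ (2*(n:ℝ))^(tB j) := by
      intro j hj
      simp only [mem_range] at hj
      by_cases hjb : n - b ≤ j
      · have htBj : tB j = nu (n - 1 - j) := by simp only [htB]; rw [if_pos hjb]
        rw [htBj, Finset.range_eq_Ico, prodD (nu (n-1-j)) j 0 j (by omega) (le_refl j)]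
        calc ∏ t ∈ range (nu (n-1-j)),
              (((j+1-j:ℕ):ℝ) + ((j-0:ℕ):ℝ) + t) / (((j+1-j:ℕ):ℝ) + t)
            ≤ ∏ _t ∈ range (nu (n-1-j)), (2*(n:ℝ)) := by
              apply Finset.prod_le_prod
              · intro t _; positivity
              · intro t ht
                simp only [mem_range] at ht
                have e1 : j + 1 - j = 1 := by omega
                have e2 : j - 0 = j := by omega
                rw [e1, e2]
                have h2 : (j:ℝ) ≤ n := by exact_mod_cast Nat.cast_le.2 (by omega)
                have h3 : (t:ℝ) + 1 ≤ l := by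
                  have hk : t + 1 ≤ l := by have := hnl' (n-1-j); omega
                  exact_mod_cast hk
                have h4 : (l:ℝ) ≤ n := by exact_mod_cast Nat.cast_le.2 (by omega)
                rw [div_le_iff₀ (by positivity)]
                push_cast
                nlinarith [Nat.cast_nonneg (α := ℝ) t]
          _ = (2*(n:ℝ))^(nu (n-1-j)) := by rw [Finset.prod_const, Finset.card_range]
      · have htBj : tB j = 0 := by simp only [htB]; rw [if_neg hjb]
        rw [htBj, pow_zero]
        apply le_of_eq
        apply Finset.prod_eq_one
        intro i hi
        simp only [mem_range] at hi
        have : ((0:ℕ):ℝ) + j - i = (j:ℝ) - i := by push_cast; ring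
        rw [this]
        apply div_self
        have : (i:ℝ) < j := by exact_mod_cast Nat.cast_lt.2 (by omega)
        linarith
    calc (∏ j ∈ range n, ∏ i ∈ range j, (((tB j : ℝ) + j - i) / ((j:ℝ) - i)))
        ≤ ∏ j ∈ range n, (2*(n:ℝ))^(tB j) := by
          apply Finset.prod_le_prod _ hper
          intro j _
          apply Finset.prod_nonneg
          intro i hi
          simp only [mem_range] at hi
          have : (i:ℝ) < j := by exact_mod_cast Nat.cast_lt.2 (by omega)
          have : (0:ℝ) ≤ (tB j : ℝ) := by positivity
          apply div_nonneg <;> linarith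
      _ = (2*(n:ℝ))^(∑ j ∈ range n, tB j) := by rw [Finset.prod_pow_eq_pow_sum]
      _ = (2*(n:ℝ))^l := by rw [htB, sumB b n nu (by omega), hnl]
  calc _ ≤ (2*(n:ℝ))^k * (2*(n:ℝ))^l := by
        apply mul_le_mul boundA boundB _ (by positivity)
        apply Finset.prod_nonneg
        intro p hp
        simp only [mem_filter, mem_product, mem_range] at hp
        have hd : (0:ℝ) < (p.2:ℝ) - p.1 := by
          have : (p.1:ℝ) < p.2 := by exact_mod_cast hp.2
          linarith
        have : (0:ℝ) ≤ (tB p.2 : ℝ) := by positivity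
        apply div_nonneg <;> linarith
    _ = (2*(n:ℝ))^(k+l) := (pow_add _ _ _).symm
open Finset

lemma lower (k l a b n : ℕ) (m nu : ℕ → ℕ)
    (hm : Antitone m) (hnu : Antitone nu)
    (hma : ∀ i, m i ≠ 0 ↔ i < a) (hnub : ∀ i, nu i ≠ 0 ↔ i < b)
    (hmk : ∑ i ∈ Finset.range a, m i = k) (hnl : ∑ i ∈ Finset.range b, nu i = l)
    (hn : 2*(a+b) + k + l + 2 ≤ n) :
    ((n:ℝ)/(2*((a:ℝ)+k+1)))^k * ((n:ℝ)/(2*((b:ℝ)+l+1)))^l ≤ weylD m nu a b n := by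
  have hab : a + b ≤ n := by omega
  have hmk' : ∀ i, m i ≤ k := by
    intro i
    by_cases hi : i < a
    · exact hmk ▸ Finset.single_le_sum (f := m) (fun _ _ => Nat.zero_le _) (mem_range.2 hi)
    · have : m i = 0 := by by_contra h; exact hi ((hma i).1 h)
      omega
  have hnl' : ∀ t, nu t ≤ l := by
    intro t
    by_cases ht : t < b
    · exact hnl ▸ Finset.single_le_sum (f := nu) (fun _ _ => Nat.zero_le _) (mem_range.2 ht)
    · have : nu t = 0 := by by_contra h; exact ht ((hnub t).1 h)
      omega
  set Z1 : ℝ := (n:ℝ)/(2*((a:ℝ)+k+1)) with hZ1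
  set Z2 : ℝ := (n:ℝ)/(2*((b:ℝ)+l+1)) with hZ2
  have hZ1nn : 0 ≤ Z1 := by rw [hZ1]; positivity
  have hZ2nn : 0 ≤ Z2 := by rw [hZ2]; positivity
  have hM : (n:ℝ)/2 ≤ ((n - b - a : ℕ):ℝ) := by
    have h1 : n ≤ 2 * (n - b - a) := by omega
    have h2 : (n:ℝ) ≤ 2 * ((n - b - a : ℕ):ℝ) := by exact_mod_cast h1
    linarith
  set LA : ℕ → ℕ → ℝ := fun i j =>
    if i < a ∧ a ≤ j ∧ j < n - b then ((m i : ℝ) + j - i) / ((j:ℝ) - i) else 1 with hLA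
  set LB : ℕ → ℕ → ℝ := fun i j =>
    if a ≤ i ∧ i < n - b ∧ n - b ≤ j then ((nu (n-1-j) : ℝ) + j - i) / ((j:ℝ) - i) else 1
    with hLB
  have hLAnn : ∀ i j : ℕ, i < j → 0 ≤ LA i j := by
    intro i j hij
    simp only [hLA]
    split_ifs with h
    · have : (i:ℝ) < j := by exact_mod_cast hij
      apply div_nonneg _ (by linarith)
      have : (0:ℝ) ≤ (m i : ℝ) := by positivity
      linarith
    · norm_num
  have hLBnn : ∀ i j : ℕ, i < j → 0 ≤ LB i j := by
    intro i j hij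
    simp only [hLB]
    split_ifs with h
    · have : (i:ℝ) < j := by exact_mod_cast hij
      apply div_nonneg _ (by linarith)
      have : (0:ℝ) ≤ (nu (n-1-j) : ℝ) := by positivity
      linarith
    · norm_num
  -- pointwise : LA * LB ≤ g
  have step1 : ∏ p ∈ Finset.filter (fun p => p.1 < p.2) (range n ×ˢ range n),
      (LA p.1 p.2 * LB p.1 p.2) ≤ weylD m nu a b n := by
    apply Finset.prod_le_prod
    · intro p hp
      simp only [mem_filter, mem_product, mem_range] at hp
      exact mul_nonneg (hLAnn _ _ hp.2) (hLBnn _ _ hp.2)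
    · intro p hp
      simp only [mem_filter, mem_product, mem_range] at hp
      obtain ⟨⟨hp1, hp2⟩, hp3⟩ := hp
      have hd : (0:ℝ) < (p.2:ℝ) - p.1 := by
        have : (p.1:ℝ) < p.2 := by exact_mod_cast hp3
        linarith
      by_cases hA : p.1 < a ∧ a ≤ p.2 ∧ p.2 < n - b
      · have hnB : ¬ (a ≤ p.1 ∧ p.1 < n - b ∧ n - b ≤ p.2) := by omega
        simp only [hLA, hLB, if_pos hA, if_neg hnB, mul_one]
        apply le_of_eq
        have e1 : wt m nu a b n p.1 = (m p.1 : ℤ) := by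
          unfold wt; rw [if_pos hA.1]
        have e2 : wt m nu a b n p.2 = 0 := by
          unfold wt; rw [if_neg (by omega), if_neg (by omega)]
        rw [e1, e2]
        push_cast
        ring
      · by_cases hB : a ≤ p.1 ∧ p.1 < n - b ∧ n - b ≤ p.2
        · simp only [hLA, hLB, if_neg (by omega : ¬(p.1 < a ∧ a ≤ p.2 ∧ p.2 < n - b)),
            if_pos hB, one_mul]
          apply le_of_eq
          have e1 : wt m nu a b n p.1 = 0 := by
            unfold wt; rw [if_neg (by omega), if_neg (by omega)]
          have e2 : wt m nu a b n p.2 = -(nu (n-1-p.2) : ℤ) := by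
            unfold wt; rw [if_neg (by omega), if_pos (by omega)]
          rw [e1, e2]
          push_cast
          ring
        · simp only [hLA, hLB, if_neg hA, if_neg hB, mul_one]
          rw [le_div_iff₀ hd, one_mul]
          have hdom : (wt m nu a b n p.2 : ℝ) ≤ (wt m nu a b n p.1 : ℝ) := by
            exact_mod_cast wt_anti m nu a b n hm hnu hp3.le hp2
          linarith
  refine le_trans ?_ step1
  rw [Finset.prod_mul_distrib]
  have boundA : Z1^k ≤ ∏ p ∈ Finset.filter (fun p => p.1 < p.2) (range n ×ˢ range n),
      LA p.1 p.2 := by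
    rw [pairProd_eq₁ n LA]
    have hper : ∀ i ∈ range n,
        Z1^(if i < a then m i else 0) ≤ ∏ j ∈ Ico (i+1) n, LA i j := by
      intro i hi
      simp only [mem_range] at hi
      by_cases hia : i < a
      · rw [if_pos hia]
        have hfil : ∏ j ∈ Ico (i+1) n, LA i j
            = ∏ j ∈ Ico a (n - b), (((m i : ℝ) + j - i) / ((j:ℝ) - i)) := by
          simp only [hLA]
          rw [Finset.prod_ite, Finset.prod_const_one, mul_one]
          apply Finset.prod_congr _ (fun _ _ => rfl)
          ext j
          simp only [mem_filter, mem_Ico]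
          omega
        rw [hfil, prodI (m i) i a (n - b) hia]
        calc Z1^(m i) = ∏ _t ∈ range (m i), Z1 := by
              rw [Finset.prod_const, Finset.card_range]
          _ ≤ _ := by
            apply Finset.prod_le_prod (fun _ _ => hZ1nn)
            intro t ht
            simp only [mem_range] at ht
            have hD0 : (0:ℝ) < ((a - i : ℕ):ℝ) + t := by
              have : 1 ≤ a - i := by omega
              have : (1:ℝ) ≤ ((a - i : ℕ):ℝ) := by exact_mod_cast this
              positivity
            rw [le_div_iff₀ hD0]
            have hDle : ((a - i : ℕ):ℝ) + t ≤ (a:ℝ) + k + 1 := by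
              have h1 : ((a - i : ℕ):ℝ) ≤ a := by exact_mod_cast Nat.sub_le a i
              have h2 : t + 1 ≤ k := by have := hmk' i; omega
              have h2' : (t:ℝ) + 1 ≤ k := by exact_mod_cast h2
              linarith
            have hZD : Z1 * (((a - i : ℕ):ℝ) + t) ≤ Z1 * ((a:ℝ) + k + 1) :=
              mul_le_mul_of_nonneg_left hDle hZ1nn
            have hZeq : Z1 * ((a:ℝ) + k + 1) = (n:ℝ)/2 := by
              rw [hZ1]; field_simp
            have hMM : (n - (b + a) : ℕ) = n - b - a := by omega
            have key : (n:ℝ)/2 ≤ ((n - b - a : ℕ):ℝ) := hM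
            have hD0' : (0:ℝ) ≤ ((a - i : ℕ):ℝ) + t := hD0.le
            have hcast : ((n - b - a : ℕ):ℝ) = ((n - b - a : ℕ):ℝ) := rfl
            -- numerator is (a-i) + (n-b-a) + t
            have : ((n - b - a : ℕ):ℝ) ≤ ((a - i:ℕ):ℝ) + ((n - b - a : ℕ):ℝ) + t := by
              have h0 : (0:ℝ) ≤ ((a - i:ℕ):ℝ) := by positivity
              have h0' : (0:ℝ) ≤ (t:ℝ) := by positivity
              linarith
            linarith
      · rw [if_neg hia, pow_zero]
        apply le_of_eq
        symm
        apply Finset.prod_eq_one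
        intro j hj
        simp only [hLA]
        rw [if_neg (by omega)]
    calc Z1^k = ∏ i ∈ range n, Z1^(if i < a then m i else 0) := by
          rw [Finset.prod_pow_eq_pow_sum, sumA a n m (by omega), hmk]
      _ ≤ _ := Finset.prod_le_prod (fun i _ => by positivity) hper
  have boundB : Z2^l ≤ ∏ p ∈ Finset.filter (fun p => p.1 < p.2) (range n ×ˢ range n),
      LB p.1 p.2 := by
    rw [pairProd_eq₂ n LB]
    have hper : ∀ j ∈ range n,
        Z2^(if n - b ≤ j then nu (n-1-j) else 0) ≤ ∏ i ∈ range j, LB i j := by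
      intro j hj
      simp only [mem_range] at hj
      by_cases hjb : n - b ≤ j
      · rw [if_pos hjb]
        have hfil : ∏ i ∈ range j, LB i j
            = ∏ i ∈ Ico a (n - b), (((nu (n-1-j) : ℝ) + j - i) / ((j:ℝ) - i)) := by
          simp only [hLB]
          rw [Finset.prod_ite, Finset.prod_const_one, mul_one]
          apply Finset.prod_congr _ (fun _ _ => rfl)
          ext i
          simp only [mem_filter, mem_range, mem_Ico]
          omega
        rw [hfil, prodD (nu (n-1-j)) j a (n - b) (by omega) hjb]
        calc Z2^(nu (n-1-j)) = ∏ _t ∈ range (nu (n-1-j)), Z2 := by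
              rw [Finset.prod_const, Finset.card_range]
          _ ≤ _ := by
            apply Finset.prod_le_prod (fun _ _ => hZ2nn)
            intro t ht
            simp only [mem_range] at ht
            have hs1 : 1 ≤ j + 1 - (n - b) := by omega
            have hD0 : (0:ℝ) < ((j + 1 - (n - b) : ℕ):ℝ) + t := by
              have : (1:ℝ) ≤ ((j + 1 - (n - b) : ℕ):ℝ) := by exact_mod_cast hs1
              positivity
            rw [le_div_iff₀ hD0]
            have hDle : ((j + 1 - (n - b) : ℕ):ℝ) + t ≤ (b:ℝ) + l + 1 := by
              have h1 : j + 1 - (n - b) ≤ b := by omega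
              have h1' : ((j + 1 - (n - b) : ℕ):ℝ) ≤ b := by exact_mod_cast h1
              have h2 : t + 1 ≤ l := by have := hnl' (n-1-j); omega
              have h2' : (t:ℝ) + 1 ≤ l := by exact_mod_cast h2
              linarith
            have hZD : Z2 * (((j + 1 - (n - b) : ℕ):ℝ) + t) ≤ Z2 * ((b:ℝ) + l + 1) :=
              mul_le_mul_of_nonneg_left hDle hZ2nn
            have hZeq : Z2 * ((b:ℝ) + l + 1) = (n:ℝ)/2 := by
              rw [hZ2]; field_simp
            have hMeq : (n - b - a : ℕ) = n - b - a := rfl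
            have key : (n:ℝ)/2 ≤ ((n - b - a : ℕ):ℝ) := hM
            have : ((n - b - a : ℕ):ℝ) ≤ ((j + 1 - (n - b):ℕ):ℝ) + ((n - b - a : ℕ):ℝ) + t := by
              have h0 : (0:ℝ) ≤ ((j + 1 - (n - b):ℕ):ℝ) := by positivity
              have h0' : (0:ℝ) ≤ (t:ℝ) := by positivity
              linarith
            linarith
      · rw [if_neg hjb, pow_zero]
        apply le_of_eq
        symm
        apply Finset.prod_eq_one
        intro i hi
        simp only [hLB]
        rw [if_neg (by omega)]
    calc Z2^l = ∏ j ∈ range n, Z2^(if n - b ≤ j then nu (n-1-j) else 0) := by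
          rw [Finset.prod_pow_eq_pow_sum, sumB b n nu (by omega), hnl]
      _ ≤ _ := Finset.prod_le_prod (fun j _ => by positivity) hper
  exact mul_le_mul boundA boundB (by positivity) (le_trans (by positivity) boundA)

/-- For fixed partitions `μ ⊢ k` (with `a` rows, parts `m`) and `ν ⊢ ℓ` (with `b` rows,
parts `nu`), the dimension `D_{[μ,ν]}(n)` satisfies `D_{[μ,ν]}(n) ≍ n^{k+ℓ}` as `n → ∞`:
there are constants `c, C > 0` and `n₀` with `c n^{k+ℓ} ≤ D_{[μ,ν]}(n) ≤ C n^{k+ℓ}` for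
all `n ≥ n₀`. -/
theorem stmt_14 (k l a b : ℕ) (m nu : ℕ → ℕ)
    (hm : Antitone m) (hnu : Antitone nu)
    (hma : ∀ i, m i ≠ 0 ↔ i < a) (hnub : ∀ i, nu i ≠ 0 ↔ i < b)
    (hmk : ∑ i ∈ Finset.range a, m i = k) (hnl : ∑ i ∈ Finset.range b, nu i = l) :
    ∃ c C : ℝ, 0 < c ∧ 0 < C ∧ ∃ n₀ : ℕ, ∀ n ≥ n₀,
      c * (n : ℝ) ^ (k + l) ≤ weylD m nu a b n ∧ weylD m nu a b n ≤ C * (n : ℝ) ^ (k + l) := by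
  refine ⟨((2*((a:ℝ)+k+1))⁻¹)^k * ((2*((b:ℝ)+l+1))⁻¹)^l, 2^(k+l), by positivity, by positivity,
    2*(a+b) + k + l + 2, fun n hn => ⟨?_, ?_⟩⟩
  · have h := lower k l a b n m nu hm hnu hma hnub hmk hnl hn
    have heq : ((n:ℝ)/(2*((a:ℝ)+k+1)))^k * ((n:ℝ)/(2*((b:ℝ)+l+1)))^l
        = ((2*((a:ℝ)+k+1))⁻¹)^k * ((2*((b:ℝ)+l+1))⁻¹)^l * (n:ℝ)^(k+l) := by
      rw [div_eq_mul_inv, div_eq_mul_inv, mul_pow, mul_pow, pow_add]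
      ring
    rw [heq] at h
    exact h
  · have h := upper k l a b n m nu hm hnu hma hnub hmk hnl hn
    have heq : (2*(n:ℝ))^(k+l) = 2^(k+l) * (n:ℝ)^(k+l) := mul_pow 2 _ (k+l)
    rw [heq] at h
    exact h
end
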